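/- Consider the double complex computing cyclic homology of the simplicial ring resolution R of ℤ/pⁿ: in bidegree giving total degree 2k one has generators 1⊗t^{⊗k}, with vertical differential b(t^{⊗k}) = pⁿ(1⊗t^{⊗k-1}) and horizontal (Connes) differential B(t^{⊗k}) = k·(1⊗t^{⊗k}), B(1⊗t^{⊗k}) = 0. The homology of the total complex in degree 2(j-1) is cyclic of order p^{nj} for 2(j-1) < 2p, and vanishes in odd degrees below 2p. In other words, the derived cyclic homology of ℤ/pⁿ satisfies HC̃_{2(j-1)}(ℤ/pⁿ) ≅ ℤ/p^{nj} for 2(j-1) < 2p and HC̃_i(ℤ/pⁿ) = 0 for odd i < 2p. -/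

import Mathlib

open CategoryTheory

/-- The component in odd total degree `m+1 = 2r+1` of the differential `b + B` of
the cyclic bicomplex `B(R)_{s,t} = C_{t-s}` of the resolution `R` of `ℤ/pⁿ`
(with `c = pⁿ`): the total complex has in degree `2r` the generators `1⊗t^{⊗(r-s)}`
(column `s = 0, …, r`) and in degree `2r+1` the generators `t^{⊗(r+1-s)}`
(column `s = 0, …, r`), with `b(t^{⊗k}) = c·(1⊗t^{⊗(k-1)})` (same column) and
`B(t^{⊗k}) = k·(1⊗t^{⊗k})` (column `s-1`), `B(1⊗t^{⊗k}) = 0`. In coordinates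
indexed by the column `s`, the target coordinate `s` receives
`c·x_s + (m/2 - s)·x_{s+1}`. -/
def cyclicTotalD (c : ℤ) (m : ℕ) :
    ((Fin ((m + 1) / 2 + 1) → ℤ) →ₗ[ℤ] (Fin (m / 2 + 1) → ℤ)) where
  toFun x s :=
    c * x ⟨s.val, lt_of_lt_of_le s.isLt
        (Nat.succ_le_succ (Nat.div_le_div_right (Nat.le_succ m)))⟩ +
      ((m / 2 : ℤ) - (s.val : ℤ)) *
        (if h : s.val + 1 < (m + 1) / 2 + 1 then x ⟨s.val + 1, h⟩ else 0)
  map_add' a b := by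
    funext s
    by_cases h : s.val + 1 < (m + 1) / 2 + 1
    · simp only [dif_pos h, Pi.add_apply]
      ring
    · simp only [dif_neg h, Pi.add_apply]
      ring
  map_smul' r a := by
    funext s
    by_cases h : s.val + 1 < (m + 1) / 2 + 1
    · simp only [dif_pos h, Pi.smul_apply, smul_eq_mul, RingHom.id_apply]
      ring
    · simp only [dif_neg h, Pi.smul_apply, smul_eq_mul, RingHom.id_apply]
      ring

/-- The total complex of the cyclic bicomplex `(B(R), b, B)` of the resolution `R` of
`ℤ/pⁿ` (`c = pⁿ`): in total degree `m` it is free on the `⌊m/2⌋ + 1` generators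
`1⊗t^{⊗k}` (`m` even) resp. `t^{⊗k}` (`m` odd), the differential from even degrees
vanishes and from odd degrees is given by `cyclicTotalD`. -/
noncomputable def cyclicTotalComplex (c : ℤ) : ChainComplex (ModuleCat ℤ) ℕ :=
  ChainComplex.of (fun m => ModuleCat.of ℤ (Fin (m / 2 + 1) → ℤ))
    (fun m => if Even m then ModuleCat.ofHom (cyclicTotalD c m) else 0)
    (by
      intro n
      rcases Nat.even_or_odd n with h | h
      · have h' : ¬ Even (n + 1) := by simp [Nat.even_add_one, h]
        simp only [if_neg h']
        exact Limits.zero_comp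
      · simp only [if_neg (Nat.not_even_iff_odd.mpr h)]
        exact Limits.comp_zero)

/-!
The differentials leaving even degrees vanish, and the one from degree `2r + 1` to `2r` is, in
the generators, the upper bidiagonal matrix with `pⁿ` on the diagonal and `r, r - 1, …, 1` just
above it. Its determinant `p^{n(r+1)}` is nonzero, so the odd homology vanishes and the cokernel,
which is the even homology, has order `p^{n(r+1)}`. When `r < p` the superdiagonal entries are prime to `p`, so the relations `pⁿ eₛ₊₁ + (r - s) eₛ = 0` express every
generator through the last one: the cokernel is cyclic, hence `ℤ/p^{n(r+1)}`.
-/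

namespace Matrix

variable {R : Type*}

def upperBidiagonal [Zero R] (d : R) (a : ℕ → R) (r : ℕ) : Matrix (Fin (r + 1)) (Fin (r + 1)) R :=
  of fun i j => if j = i then d else if (j : ℕ) = i + 1 then a i else 0

theorem upperBidiagonal_isUpperTriangular [Zero R] (d : R) (a : ℕ → R) (r : ℕ) :
    (upperBidiagonal d a r).IsUpperTriangular := by
  intro i j hij
  have : (j : ℕ) < i := hij
  simp only [upperBidiagonal, of_apply]
  rw [if_neg (by omega), if_neg (by omega)]

theorem det_upperBidiagonal [CommRing R] (d : R) (a : ℕ → R) (r : ℕ) :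
    (upperBidiagonal d a r).det = d ^ (r + 1) := by
  rw [det_of_isUpperTriangular (upperBidiagonal_isUpperTriangular d a r)]
  simp [upperBidiagonal]

theorem upperBidiagonal_mulVec_single_succ [NonAssocSemiring R] (d : R) (a : ℕ → R) {r : ℕ}
    (i : Fin r) :
    upperBidiagonal d a r *ᵥ Pi.single i.succ 1 =
      d • Pi.single i.succ 1 + a i • Pi.single i.castSucc 1 := by
  ext k
  rw [mulVec_single_one]
  simp only [col_apply, upperBidiagonal, of_apply, Pi.add_apply, Pi.smul_apply, Pi.single_apply,
    smul_eq_mul, mul_ite, mul_one, mul_zero, Fin.ext_iff, Fin.val_succ, Fin.val_castSucc]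
  split_ifs <;> first | omega | simp_all

theorem det_smul_mem_range_mulVecLin [CommRing R] {ι : Type*} [Fintype ι] [DecidableEq ι]
    (A : Matrix ι ι R) (v : ι → R) : A.det • v ∈ LinearMap.range A.mulVecLin :=
  ⟨A.adjugate *ᵥ v, by rw [mulVecLin_apply, mulVec_mulVec, mul_adjugate, smul_mulVec, one_mulVec]⟩

theorem natCard_quotient_range_mulVecLin {ι : Type*} [Fintype ι] [DecidableEq ι]
    (A : Matrix ι ι ℤ) (hA : A.det ≠ 0) :
    Nat.card ((ι → ℤ) ⧸ LinearMap.range A.mulVecLin) = A.det.natAbs := by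
  have hinj : Function.Injective A.mulVecLin := mulVec_injective_of_det_ne_zero hA
  rw [← (LinearMap.range A.mulVecLin).natAbs_det_equiv (LinearEquiv.ofInjective _ hinj),
    ← LinearMap.det_toLin']
  rfl

end Matrix

theorem Submodule.mem_of_isCoprime_smul_mem {R M : Type*} [CommSemiring R] [AddCommMonoid M]
    [Module R M] {S : Submodule R M} {a b : R} {x : M} (hab : IsCoprime a b) (ha : a • x ∈ S)
    (hb : b • x = 0) : x ∈ S := by
  obtain ⟨u, v, huv⟩ := hab
  have hx : x = u • a • x + v • b • x := by rw [smul_smul, smul_smul, ← add_smul, huv, one_smul]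
  rw [hx, hb, smul_zero, add_zero]
  exact S.smul_mem u ha

namespace Matrix

variable {d : ℤ} {a : ℕ → ℤ} {r : ℕ}

theorem mem_span_mkQ_single_last_of_isCoprime (ha : ∀ i : Fin r, IsCoprime (a i) d)
    (x : (Fin (r + 1) → ℤ) ⧸ LinearMap.range (upperBidiagonal d a r).mulVecLin) :
    x ∈ ℤ ∙ Submodule.mkQ _ (Pi.single (Fin.last r) 1) := by
  obtain ⟨v, rfl⟩ := Submodule.mkQ_surjective _ x
  set Q := LinearMap.range (upperBidiagonal d a r).mulVecLin
  have hgen : ∀ k, Q.mkQ (Pi.single k 1) ∈ ℤ ∙ Q.mkQ (Pi.single (Fin.last r) 1) := by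
    intro k
    induction k using Fin.reverseInduction with
    | last => exact Submodule.mem_span_singleton_self _
    | cast i ih =>
      refine Submodule.mem_of_isCoprime_smul_mem ((ha i).pow_right (n := r + 1)) ?_ ?_
      · have hrel : Q.mkQ (upperBidiagonal d a r *ᵥ Pi.single i.succ 1) = 0 :=
          (Submodule.Quotient.mk_eq_zero _).mpr ⟨_, rfl⟩
        rw [upperBidiagonal_mulVec_single_succ, map_add, map_smul, map_smul,
          add_eq_zero_iff_eq_neg'] at hrel
        rw [hrel]
        exact Submodule.neg_mem _ (Submodule.smul_mem _ d ih)
      · rw [← det_upperBidiagonal d a r, ← map_smul, Submodule.mkQ_apply,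
          Submodule.Quotient.mk_eq_zero]
        exact det_smul_mem_range_mulVecLin _ _
  rw [← Finset.univ_sum_single v, map_sum]
  refine Submodule.sum_mem _ fun k _ => ?_
  rw [← mul_one (v k), ← smul_eq_mul, Pi.single_smul', map_smul]
  exact Submodule.smul_mem _ _ (hgen k)

noncomputable def quotientRangeUpperBidiagonalEquiv (hd : d ≠ 0)
    (ha : ∀ i : Fin r, IsCoprime (a i) d) :
    ((Fin (r + 1) → ℤ) ⧸ LinearMap.range (upperBidiagonal d a r).mulVecLin) ≃ₗ[ℤ]
      ZMod (d.natAbs ^ (r + 1)) :=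
  (zmodAddEquivOfGenerator (g := Submodule.mkQ _ (Pi.single (Fin.last r) 1))
    (fun x => by
      obtain ⟨k, hk⟩ := Submodule.mem_span_singleton.mp (mem_span_mkQ_single_last_of_isCoprime ha x)
      exact ⟨k, hk⟩)
    (by rw [natCard_quotient_range_mulVecLin _ (by rw [det_upperBidiagonal]; exact pow_ne_zero _ hd),
      det_upperBidiagonal, Int.natAbs_pow])).symm.toIntLinearEquiv

end Matrix

open Matrix

theorem cyclicTotalD_eq_mulVecLin_comp (c : ℤ) {m : ℕ} (hm : Even m) :
    cyclicTotalD c m =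
      (upperBidiagonal c (fun i => ((m / 2 : ℕ) : ℤ) - i) (m / 2)).mulVecLin ∘ₗ
        (LinearEquiv.funCongrLeft ℤ ℤ
          (finCongr (by grind : m / 2 + 1 = (m + 1) / 2 + 1))).toLinearMap := by
  ext x s
  simp only [cyclicTotalD, upperBidiagonal, mulVec, dotProduct, LinearMap.coe_comp,
    LinearMap.coe_mk, AddHom.coe_mk, LinearMap.coe_single, Function.comp_apply, Pi.single_apply,
    Fin.ext_iff, mul_ite, mul_dite, mul_one, mul_zero, dite_eq_ite, Int.natCast_ediv,
    Nat.cast_ofNat, LinearEquiv.coe_coe, LinearEquiv.funCongrLeft_apply, mulVecBilin_apply,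
    of_apply, LinearMap.funLeft_apply, finCongr_apply, Fin.val_cast]
  obtain ⟨r, rfl⟩ := hm
  rw [Finset.sum_eq_single ⟨x, by omega⟩ (fun i _ hi => if_neg (by simpa [Fin.ext_iff] using hi))
    (by simp)]
  dsimp only
  split_ifs <;> omega

theorem range_cyclicTotalD (c : ℤ) {m : ℕ} (hm : Even m) :
    LinearMap.range (cyclicTotalD c m) =
      LinearMap.range (upperBidiagonal c (fun i => ((m / 2 : ℕ) : ℤ) - i) (m / 2)).mulVecLin := by
  rw [cyclicTotalD_eq_mulVecLin_comp c hm,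
    LinearMap.range_comp_of_range_eq_top _ (LinearEquiv.range _)]

theorem cyclicTotalD_injective {c : ℤ} (hc : c ≠ 0) {m : ℕ} (hm : Even m) :
    Function.Injective (cyclicTotalD c m) := by
  rw [cyclicTotalD_eq_mulVecLin_comp c hm, LinearMap.coe_comp]
  refine (mulVec_injective_of_det_ne_zero ?_).comp (LinearEquiv.injective _)
  rw [det_upperBidiagonal]
  exact pow_ne_zero _ hc

theorem cyclicTotalComplex_d_succ (c : ℤ) (m : ℕ) :
    (cyclicTotalComplex c).d (m + 1) m =
      if Even m then ModuleCat.ofHom (cyclicTotalD c m) else 0 := by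
  simp only [cyclicTotalComplex, ChainComplex.of_d]

theorem cyclicTotalComplex_d_eq_zero_of_even (c : ℤ) {i : ℕ} (hi : Even i) (j : ℕ) :
    (cyclicTotalComplex c).d i j = 0 := by
  by_cases hij : j + 1 = i
  · subst hij
    rw [cyclicTotalComplex_d_succ, if_neg (Nat.even_add_one.mp hi)]
    rfl
  · exact (cyclicTotalComplex c).shape _ _ hij

noncomputable def cyclicTotalComplexHomologyIsoOfEven (c : ℤ) {m : ℕ} (hm : Even m) :
    (cyclicTotalComplex c).homology m ≅
      ModuleCat.of ℤ ((Fin (m / 2 + 1) → ℤ) ⧸ LinearMap.range (cyclicTotalD c m)) :=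
  (cyclicTotalComplex c).homologyIsoSc' (m + 1) m _ (by simp) rfl ≪≫
    ShortComplex.asIsoHomologyι _ (cyclicTotalComplex_d_eq_zero_of_even c hm _) ≪≫
    ShortComplex.moduleCatOpcyclesIso _ ≪≫
    (Submodule.quotEquivOfEq _ _ (by
      change LinearMap.range ((cyclicTotalComplex c).d (m + 1) m).hom = _
      rw [cyclicTotalComplex_d_succ, if_pos hm]
      rfl)).toModuleIso

theorem cyclicTotalComplex_isZero_homology_of_odd {c : ℤ} (hc : c ≠ 0) {i : ℕ} (hi : Odd i) :
    Limits.IsZero ((cyclicTotalComplex c).homology i) := by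
  obtain ⟨m, rfl⟩ := hi
  have hm : Even (2 * m) := even_two_mul m
  rw [← HomologicalComplex.exactAt_iff_isZero_homology,
    (cyclicTotalComplex c).exactAt_iff' (2 * m + 2) (2 * m + 1) (2 * m) (by simp) (by simp),
    ShortComplex.exact_iff_mono _ (cyclicTotalComplex_d_eq_zero_of_even c (by grind) _),
    ModuleCat.mono_iff_injective]
  change Function.Injective ((cyclicTotalComplex c).d (2 * m + 1) (2 * m))
  rw [cyclicTotalComplex_d_succ, if_pos hm]
  exact cyclicTotalD_injective hc hm

theorem cyclicTotalComplex_homology_two_mul_nonempty_iso {c : ℤ} (hc : c ≠ 0) (r : ℕ)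
    (hcop : ∀ i < r, IsCoprime ((r : ℤ) - i) c) :
    Nonempty ((cyclicTotalComplex c).homology (2 * r) ≅
      ModuleCat.of ℤ (ZMod (c.natAbs ^ (r + 1)))) := by
  have hm : Even (2 * r) := even_two_mul r
  have hr : 2 * r / 2 = r := by omega
  have e := cyclicTotalComplexHomologyIsoOfEven c hm ≪≫
    (Submodule.quotEquivOfEq _ _ (range_cyclicTotalD c hm)).toModuleIso ≪≫
    (quotientRangeUpperBidiagonalEquiv hc fun i => by
      simpa only [hr] using hcop i (by omega)).toModuleIso
  rw [hr] at e
  exact ⟨e⟩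

theorem stmt8_general (p n : ℕ) (hp : p.Prime) :
    (∀ j : ℕ, 1 ≤ j → 2 * (j - 1) < 2 * p →
      Nonempty ((cyclicTotalComplex ((p : ℤ) ^ n)).homology (2 * (j - 1)) ≅
        ModuleCat.of ℤ (ZMod (p ^ (n * j))))) ∧
    (∀ i : ℕ, i < 2 * p → Odd i →
      Limits.IsZero ((cyclicTotalComplex ((p : ℤ) ^ n)).homology i)) := by
  have hc : (p : ℤ) ^ n ≠ 0 := pow_ne_zero n (Int.natCast_ne_zero.mpr hp.ne_zero)
  refine ⟨fun j hj hjp => ?_, fun i _ hi => cyclicTotalComplex_isZero_homology_of_odd hc hi⟩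
  obtain ⟨r, rfl⟩ : ∃ r, j = r + 1 := ⟨j - 1, by omega⟩
  have hcop : ∀ i < r, IsCoprime ((r : ℤ) - i) ((p : ℤ) ^ n) := fun i hi => by
    rw [← Nat.cast_sub hi.le, ← Nat.cast_pow, Nat.isCoprime_iff_coprime]
    exact Nat.Coprime.pow_right n (Nat.coprime_comm.mp
      ((hp.coprime_iff_not_dvd).mpr (Nat.not_dvd_of_pos_of_lt (by omega) (by omega))))
  have hN : ((p : ℤ) ^ n).natAbs ^ (r + 1) = p ^ (n * (r + 1)) := by
    rw [Int.natAbs_pow, Int.natAbs_natCast, pow_mul]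
  exact hN ▸ cyclicTotalComplex_homology_two_mul_nonempty_iso hc r hcop

/-- Computation of the derived cyclic homology of `ℤ/pⁿ` in degrees `< 2p`, as the
homology of the total complex of the cyclic bicomplex of the resolution `R`:
`HC̃_{2(j-1)}(ℤ/pⁿ) ≅ ℤ/p^{nj}` for `2(j-1) < 2p`, and `HC̃_i(ℤ/pⁿ) = 0` for odd
`i < 2p`. -/
theorem stmt8 (p n : ℕ) (hp : p.Prime) (hn : 1 ≤ n) :
    (∀ j : ℕ, 1 ≤ j → 2 * (j - 1) < 2 * p →
      Nonempty ((cyclicTotalComplex ((p : ℤ) ^ n)).homology (2 * (j - 1)) ≅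
        ModuleCat.of ℤ (ZMod (p ^ (n * j))))) ∧
    (∀ i : ℕ, i < 2 * p → Odd i →
      Limits.IsZero ((cyclicTotalComplex ((p : ℤ) ^ n)).homology i)) :=
  stmt8_general p n hp
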